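/- Let D ⊂ ℂ be an open disc, U a contractible complex manifold, m_1,…,m_{n+k} ≥ 0 integers, p_1,…,p_{n+k}: U → D holomorphic maps, and a: U×D → ℂ* a holomorphic nonvanishing function; consider the family of Abelian differentials α_u := a(u,z)(z−p_1(u))^{m_1}⋯(z−p_{n+k}(u))^{m_{n+k}} dz on D. Then: (a) for every i,j, the function u ↦ ∫_{p_i(u)}^{p_j(u)} α_u (the integral along any path in D from p_i(u) to p_j(u), well-defined since α_u is a holomorphic 1-form on the simply connected D) is holomorphic on U; (b) for every i and every u ∈ U, the functionals {∫_{γ_{ij}(u)} : j ≠ i} form a basis of the dual of 𝐇¹(ℂ_{D,P})_u; (c) the assignment u ↦ (Σ_j c_j γ_{ij} ↦ Σ_j c_j ∫_{γ_{ij}} α_u) determines a holomorphic section of the ℂ-local system 𝐇¹(ℂ_{D,P}) over U. -/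

import Mathlib

/-- The integral `∫_a^b f(z) dz` of a function `f : ℂ → ℂ` along the straight segment
from `a` to `b` (in a convex domain, such as a disc, this computes the path integral
along any path from `a` to `b` when `f` is holomorphic). -/
noncomputable def pathIntegral (f : ℂ → ℂ) (a b : ℂ) : ℂ :=
  ∫ t in (0 : ℝ)..1, (b - a) * f (a + (t : ℂ) * (b - a))

/-- The line of constant functions in `ℂ^N`. -/
noncomputable def constantsSubmodule (N : ℕ) : Submodule ℂ (Fin N → ℂ) :=
  Submodule.span ℂ {(fun _ => (1 : ℂ))}

/-- The fiber of the ℂ-local system `𝐇¹(ℂ_{D,P})`: since `D` and `U` are contractible,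
`𝐇¹(ℂ_{D,P})_u ≅ 𝐇⁰(⊕_i ℂ_{p_i(u)})/𝐇⁰(ℂ_D) ≅ ℂ^{n+k}/ℂ`, a local system of rank
`n+k-1` over `U` (here `N = n+k`). -/
abbrev RelH1 (N : ℕ) := (Fin N → ℂ) ⧸ constantsSubmodule N

/-- The functional on `𝐇¹(ℂ_{D,P}) ≅ ℂ^N/ℂ` given by the relative homology class
`γ_{ij}` of a path in `D` from `p_i` to `p_j`: it sends the class of
`(g(p_1),…,g(p_N))` (values at the marked points of a primitive `g` of the
differential) to `g(p_j) - g(p_i)`. -/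
noncomputable def gammaIJ (N : ℕ) (i j : Fin N) : Module.Dual ℂ (RelH1 N) :=
  (constantsSubmodule N).liftQ ((LinearMap.proj j : (Fin N → ℂ) →ₗ[ℂ] ℂ) - LinearMap.proj i)
    (by
      rw [constantsSubmodule, Submodule.span_le, Set.singleton_subset_iff]
      simp [LinearMap.mem_ker, LinearMap.sub_apply, LinearMap.proj_apply])

/-!
On the disc every `α_u` has a primitive, so a period is a difference of values of a primitive:
`∫_{p_i(u)}^{p_j(u)} α_u = F_j(u) - F_i(u)` with `F_j(u) = ∫_c^{p_j(u)} α_u`. This gives (c) once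
the `F_j` are holomorphic, and the periods themselves are holomorphic for the same reason: each
is `∫_0^1 Ψ(u,t) dt` for a `Ψ` jointly holomorphic near `U × [0,1] ⊂ E × ℂ`, and one may
differentiate under the integral sign because the Cauchy estimates make the derivative of a
holomorphic map on any complex normed space continuous. Part (b) is linear algebra:
`x ↦ (x_j - x_i)_{j ≠ i}` identifies `ℂ^N/ℂ` with `ℂ^{N-1}`, and the `γ_{ij}` become the
coordinate functionals.
-/

open Metric Set MeasureTheory

section Holomorphic

variable {E F : Type*} [NormedAddCommGroup E] [NormedSpace ℂ E]
  [NormedAddCommGroup F] [NormedSpace ℂ F]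

theorem norm_fderiv_le_of_forall_norm_sub_le {f : E → F} {x : E} {r M : ℝ}
    (hf : DifferentiableOn ℂ f (ball x r)) (hr : 0 < r)
    (hM : ∀ y ∈ ball x r, ‖f y - f x‖ ≤ M) : ‖fderiv ℂ f x‖ ≤ M / r :=
  Complex.norm_fderiv_le_div_of_mapsTo_ball hf
    (fun y hy => mem_closedBall_iff_norm.2 (hM y hy)) hr

/-- Cauchy estimates, applied twice: `f` is `2K/ρ`-Lipschitz on `ball z ρ`, so the difference
`v ↦ f (v + w) - f v` is `O(‖w‖)` on `ball z (ρ/2)`, which bounds its derivative at `z`. -/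
theorem norm_fderiv_add_sub_fderiv_le {f : E → F} {z w : E} {ρ K : ℝ} (hρ : 0 < ρ)
    (hf : DifferentiableOn ℂ f (ball z (2 * ρ)))
    (hK : ∀ v ∈ ball z (2 * ρ), ‖f v - f z‖ ≤ K) (hw : ‖w‖ < ρ / 2) :
    ‖fderiv ℂ f (z + w) - fderiv ℂ f z‖ ≤ 8 * K / ρ ^ 2 * ‖w‖ := by
  have hsub : ∀ y ∈ ball z ρ, ball y ρ ⊆ ball z (2 * ρ) := fun y hy =>
    ball_subset_ball' (by rw [mem_ball] at hy; linarith)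
  have hdiff : ∀ y ∈ ball z ρ, DifferentiableAt ℂ f y := fun y hy =>
    hf.differentiableAt (isOpen_ball.mem_nhds (hsub y hy (mem_ball_self hρ)))
  have hderiv : ∀ y ∈ ball z ρ, ‖fderiv ℂ f y‖ ≤ 2 * K / ρ := fun y hy =>
    norm_fderiv_le_of_forall_norm_sub_le (hf.mono (hsub y hy)) hρ fun v hv => by
      calc ‖f v - f y‖ = ‖(f v - f z) - (f y - f z)‖ := by rw [sub_sub_sub_cancel_right]
        _ ≤ K + K := norm_sub_le_of_le (hK v (hsub y hy hv))
            (hK y (hsub y hy (mem_ball_self hρ)))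
        _ = 2 * K := by ring
  have hmem : ∀ v ∈ ball z (ρ / 2), v ∈ ball z ρ ∧ v + w ∈ ball z ρ := fun v hv => by
    refine ⟨ball_subset_ball (by linarith) hv, ?_⟩
    rw [mem_ball, dist_eq_norm] at hv ⊢
    calc ‖v + w - z‖ ≤ ‖v - z‖ + ‖w‖ := by rw [add_sub_right_comm]; exact norm_add_le _ _
      _ < ρ := by linarith
  have htrans : ∀ v ∈ ball z (ρ / 2), DifferentiableAt ℂ (fun v => f (v + w)) v :=
    fun v hv => (hdiff _ (hmem v hv).2).comp v (differentiableAt_id.add_const w)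
  have hlip : ∀ v ∈ ball z (ρ / 2), ‖f (v + w) - f v‖ ≤ 2 * K / ρ * ‖w‖ := fun v hv => by
    simpa using (convex_ball z ρ).norm_image_sub_le_of_norm_fderiv_le hdiff hderiv
      (hmem v hv).1 (hmem v hv).2
  have hz : z ∈ ball z (ρ / 2) := mem_ball_self (by positivity)
  have hbound := norm_fderiv_le_of_forall_norm_sub_le
    (fun v hv => ((htrans v hv).sub (hdiff v (hmem v hv).1)).differentiableWithinAt)
    (by positivity) fun v hv => norm_sub_le_of_le (hlip v hv) (hlip z hz)
  rw [fderiv_sub (htrans z hz) (hdiff z (hmem z hz).1), fderiv_comp_add_right] at hbound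
  calc _ ≤ (2 * K / ρ * ‖w‖ + 2 * K / ρ * ‖w‖) / (ρ / 2) := hbound
    _ = 8 * K / ρ ^ 2 * ‖w‖ := by field_simp; ring

theorem DifferentiableOn.continuousOn_fderiv_of_isOpen {f : E → F} {s : Set E}
    (hf : DifferentiableOn ℂ f s) (hs : IsOpen s) : ContinuousOn (fderiv ℂ f) s := by
  intro z hz
  obtain ⟨ε, hε, hεs⟩ := Metric.isOpen_iff.1 hs z hz
  obtain ⟨η, hη, hfη⟩ :=
    Metric.continuousAt_iff.1 (hf.continuousOn.continuousAt (hs.mem_nhds hz)) 1 one_pos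
  set ρ := min ε η / 2 with hρ_def
  have hρ : 0 < ρ := by positivity
  have hK : ∀ v ∈ ball z (2 * ρ), ‖f v - f z‖ ≤ 1 := fun v hv => by
    rw [← dist_eq_norm]
    exact (hfη (lt_of_lt_of_le hv (by rw [hρ_def]; linarith [min_le_right ε η]))).le
  have hball : ball z (2 * ρ) ⊆ s :=
    (ball_subset_ball (by rw [hρ_def]; linarith [min_le_left ε η])).trans hεs
  refine (Metric.continuousAt_iff.2 fun δ hδ => ?_).continuousWithinAt
  refine ⟨min (ρ / 2) (δ * ρ ^ 2 / 16), by positivity, fun y hy => ?_⟩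
  rw [dist_eq_norm] at hy ⊢
  have hbound := norm_fderiv_add_sub_fderiv_le hρ (hf.mono hball) hK
    (hy.trans_le (min_le_left _ _))
  rw [add_sub_cancel] at hbound
  calc _ ≤ 8 * 1 / ρ ^ 2 * ‖y - z‖ := hbound
    _ < 8 * 1 / ρ ^ 2 * (δ * ρ ^ 2 / 16) := by
        gcongr; exact hy.trans_le (min_le_right _ _)
    _ < δ := by field_simp; linarith

theorem differentiableAt_intervalIntegral_of_differentiableOn {Ψ : E × ℂ → F}
    {O : Set (E × ℂ)} (hO : IsOpen O) (hΨ : DifferentiableOn ℂ Ψ O) {x₀ : E} {a b : ℝ}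
    (hx₀ : ∀ t ∈ uIcc a b, (x₀, (t : ℂ)) ∈ O) :
    DifferentiableAt ℂ (fun x => ∫ t in a..b, Ψ (x, t)) x₀ := by
  have hD : ContinuousOn (fderiv ℂ Ψ) O := hΨ.continuousOn_fderiv_of_isOpen hO
  have hK : IsCompact ((fun t : ℝ => (x₀, (t : ℂ))) '' uIcc a b) :=
    isCompact_uIcc.image (by fun_prop)
  have hKO : (fun t : ℝ => (x₀, (t : ℂ))) '' uIcc a b ⊆ O := image_subset_iff.2 hx₀
  obtain ⟨M, hM⟩ := hK.exists_bound_of_continuousOn (hD.mono hKO)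
  -- a uniform tube `ball x₀ δ × [a, b]` on which `fderiv ℂ Ψ` stays bounded
  obtain ⟨δ, hδ, hthick⟩ := hK.exists_thickening_subset_open
    (hD.norm.isOpen_inter_preimage hO isOpen_Iio) fun q hq =>
      ⟨hKO hq, (hM q hq).trans_lt (lt_add_one M)⟩
  have hmem : ∀ x ∈ ball x₀ δ, ∀ t ∈ uIcc a b,
      (x, (t : ℂ)) ∈ O ∧ ‖fderiv ℂ Ψ (x, t)‖ < M + 1 := fun x hx t ht =>
    hthick (mem_thickening_iff.2 ⟨(x₀, t), mem_image_of_mem _ ht, by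
      simpa [Prod.dist_eq] using hx⟩)
  have hcont : ∀ x ∈ ball x₀ δ, ContinuousOn (fun t : ℝ => Ψ (x, t)) (uIcc a b) := fun x hx =>
    hΨ.continuousOn.comp (by fun_prop) fun t ht => (hmem x hx t ht).1
  refine (intervalIntegral.hasFDerivAt_integral_of_dominated_of_fderiv_le
    (F' := fun x t => (fderiv ℂ Ψ (x, t)).comp (ContinuousLinearMap.inl ℂ E ℂ))
    (bound := fun _ => M + 1) (ball_mem_nhds x₀ hδ) ?_
    (hcont x₀ (mem_ball_self hδ)).intervalIntegrable ?_ ?_ intervalIntegrable_const ?_)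
    |>.differentiableAt
  · filter_upwards [ball_mem_nhds x₀ hδ] with x hx
    exact ((hcont x hx).mono uIoc_subset_uIcc).aestronglyMeasurable measurableSet_uIoc
  · refine ContinuousOn.aestronglyMeasurable ?_ measurableSet_uIoc
    exact ((hD.comp (by fun_prop) fun t ht => (hmem x₀ (mem_ball_self hδ) t ht).1).clm_comp
      continuousOn_const).mono uIoc_subset_uIcc
  · refine Filter.Eventually.of_forall fun t ht x hx => ?_
    calc _ ≤ ‖fderiv ℂ Ψ (x, t)‖ * ‖ContinuousLinearMap.inl ℂ E ℂ‖ :=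
          ContinuousLinearMap.opNorm_comp_le _ _
      _ ≤ ‖fderiv ℂ Ψ (x, t)‖ * 1 := by
          gcongr; exact ContinuousLinearMap.norm_inl_le_one ℂ E ℂ
      _ ≤ M + 1 := by rw [mul_one]; exact (hmem x hx t (uIoc_subset_uIcc ht)).2.le
  · refine Filter.Eventually.of_forall fun t ht x hx => ?_
    have hΨx := hΨ.differentiableAt (hO.mem_nhds (hmem x hx t (uIoc_subset_uIcc ht)).1)
    exact hΨx.hasFDerivAt.comp x (hasFDerivAt_prodMk_left x (t : ℂ))

end Holomorphic

theorem add_ofReal_mul_sub_mem_segment {x y : ℂ} {t : ℝ} (ht : t ∈ Icc (0 : ℝ) 1) :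
    x + (t : ℂ) * (y - x) ∈ segment ℝ x y := by
  rw [segment_eq_image']
  exact ⟨t, ht, by simp only [Complex.real_smul]⟩

theorem pathIntegral_eq_sub_of_hasDerivAt {f G : ℂ → ℂ} {x y : ℂ}
    (hG : ∀ z ∈ segment ℝ x y, HasDerivAt G (f z) z) (hf : ContinuousOn f (segment ℝ x y)) :
    pathIntegral f x y = G y - G x := by
  have hseg : ∀ t ∈ uIcc (0 : ℝ) 1, x + (t : ℂ) * (y - x) ∈ segment ℝ x y := fun t ht =>
    add_ofReal_mul_sub_mem_segment (by rwa [uIcc_of_le zero_le_one] at ht)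
  have hderiv : ∀ t ∈ uIcc (0 : ℝ) 1, HasDerivAt (fun s : ℝ => G (x + s * (y - x)))
      ((y - x) * f (x + t * (y - x))) t := fun t ht => by
    have hline : HasDerivAt (fun τ : ℂ => x + τ * (y - x)) (y - x) t := by
      simpa using ((hasDerivAt_id (t : ℂ)).mul_const (y - x)).const_add x
    rw [mul_comm]
    exact ((hG _ (hseg t ht)).comp (t : ℂ) hline).comp_ofReal
  have hint : IntervalIntegrable (fun t : ℝ => (y - x) * f (x + t * (y - x))) volume 0 1 :=
    (continuousOn_const.mul (hf.comp (by fun_prop) hseg)).intervalIntegrable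
  rw [pathIntegral, intervalIntegral.integral_eq_sub_of_hasDerivAt hderiv hint]
  simp

theorem pathIntegral_eq_sub_of_differentiableOn_ball {f : ℂ → ℂ} {c x y z : ℂ} {R : ℝ}
    (hf : DifferentiableOn ℂ f (ball c R)) (hx : x ∈ ball c R) (hy : y ∈ ball c R)
    (hz : z ∈ ball c R) :
    pathIntegral f x y = pathIntegral f z y - pathIntegral f z x := by
  obtain ⟨G, hG⟩ := hf.isExactOn_ball
  have hprimitive : ∀ v ∈ ball c R, ∀ w ∈ ball c R, pathIntegral f v w = G w - G v :=
    fun v hv w hw =>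
      have hseg := (convex_ball c R).segment_subset hv hw
      pathIntegral_eq_sub_of_hasDerivAt (fun z hz => hG z (hseg hz)) (hf.continuousOn.mono hseg)
  rw [hprimitive x hx y hy, hprimitive z hz y hy, hprimitive z hz x hx]
  ring

theorem differentiableOn_pathIntegral {E : Type*} [NormedAddCommGroup E] [NormedSpace ℂ E]
    {g : E → ℂ → ℂ} {U : Set E} {S : Set ℂ} (hU : IsOpen U) (hS : IsOpen S)
    (hSconv : Convex ℝ S) (hg : DifferentiableOn ℂ (fun q : E × ℂ => g q.1 q.2) (U ×ˢ S))
    {φ ψ : E → ℂ} (hφ : DifferentiableOn ℂ φ U) (hψ : DifferentiableOn ℂ ψ U)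
    (hφS : MapsTo φ U S) (hψS : MapsTo ψ U S) :
    DifferentiableOn ℂ (fun u => pathIntegral (g u) (φ u) (ψ u)) U := by
  intro x₀ hx₀
  set ℓ : E × ℂ → ℂ := fun q => φ q.1 + q.2 * (ψ q.1 - φ q.1)
  set O : Set (E × ℂ) := (U ×ˢ univ) ∩ ℓ ⁻¹' S
  have hφ' : DifferentiableOn ℂ (fun q : E × ℂ => φ q.1) (U ×ˢ univ) :=
    hφ.comp differentiableOn_fst fun q hq => hq.1
  have hψ' : DifferentiableOn ℂ (fun q : E × ℂ => ψ q.1) (U ×ˢ univ) :=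
    hψ.comp differentiableOn_fst fun q hq => hq.1
  have hℓ : DifferentiableOn ℂ ℓ (U ×ˢ univ) := hφ'.add (differentiableOn_snd.mul (hψ'.sub hφ'))
  have hO : IsOpen O := hℓ.continuousOn.isOpen_inter_preimage (hU.prod isOpen_univ) hS
  have hΨ : DifferentiableOn ℂ (fun q : E × ℂ => (ψ q.1 - φ q.1) * g q.1 (ℓ q)) O :=
    ((hψ'.sub hφ').mono inter_subset_left).mul <|
      hg.comp (differentiableOn_fst.prodMk (hℓ.mono inter_subset_left)) fun q hq => ⟨hq.1.1, hq.2⟩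
  refine (differentiableAt_intervalIntegral_of_differentiableOn hO hΨ fun t ht => ?_)
    |>.differentiableWithinAt
  rw [uIcc_of_le zero_le_one] at ht
  exact ⟨⟨hx₀, mem_univ _⟩,
    hSconv.segment_subset (hφS hx₀) (hψS hx₀) (add_ofReal_mul_sub_mem_segment ht)⟩

section RelativeHomology

variable (N : ℕ)

theorem gammaIJ_mk (i j : Fin N) (x : Fin N → ℂ) :
    gammaIJ N i j (Submodule.Quotient.mk x) = x j - x i := by
  simp [gammaIJ]

def relativeCoordinates (i : Fin N) : (Fin N → ℂ) →ₗ[ℂ] ({j : Fin N // j ≠ i} → ℂ) :=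
  LinearMap.pi fun j : {j : Fin N // j ≠ i} =>
    (LinearMap.proj (j : Fin N) : (Fin N → ℂ) →ₗ[ℂ] ℂ) - LinearMap.proj i

@[simp]
theorem relativeCoordinates_apply (i : Fin N) (x : Fin N → ℂ) (j : {j : Fin N // j ≠ i}) :
    relativeCoordinates N i x j = x j - x i :=
  rfl

theorem ker_relativeCoordinates (i : Fin N) :
    LinearMap.ker (relativeCoordinates N i) = constantsSubmodule N := by
  ext x
  simp only [LinearMap.mem_ker, constantsSubmodule, Submodule.mem_span_singleton, funext_iff,
    Subtype.forall, relativeCoordinates_apply, Pi.zero_apply, sub_eq_zero, Pi.smul_apply,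
    smul_eq_mul, mul_one]
  constructor
  · intro h
    exact ⟨x i, fun l => by rcases eq_or_ne l i with rfl | hl; rfl; exact (h l hl).symm⟩
  · rintro ⟨a, ha⟩ l _
    rw [← ha l, ← ha i]

theorem relativeCoordinates_surjective (i : Fin N) :
    Function.Surjective (relativeCoordinates N i) := fun y =>
  ⟨fun l => if h : l = i then 0 else y ⟨l, h⟩, funext fun j => by simp [j.2]⟩

/-- `𝐇¹(ℂ_{D,P}) ≅ ℂ^{N-1}`: a class is recorded by the values of a primitive relative to its
value at `p_i`. -/
noncomputable def relH1EquivPi (i : Fin N) : RelH1 N ≃ₗ[ℂ] ({j : Fin N // j ≠ i} → ℂ) :=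
  (Submodule.quotEquivOfEq _ _ (ker_relativeCoordinates N i).symm).trans
    ((relativeCoordinates N i).quotKerEquivOfSurjective (relativeCoordinates_surjective N i))

theorem relH1EquivPi_mk (i : Fin N) (x : Fin N → ℂ) (j : {j : Fin N // j ≠ i}) :
    relH1EquivPi N i (Submodule.Quotient.mk x) j = x j - x i :=
  rfl

theorem exists_basis_gammaIJ (i : Fin N) :
    ∃ b : Module.Basis {j : Fin N // j ≠ i} ℂ (Module.Dual ℂ (RelH1 N)),
      ∀ j : {j : Fin N // j ≠ i}, b j = gammaIJ N i (j : Fin N) := by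
  refine ⟨(Pi.basisFun ℂ _).dualBasis.map (relH1EquivPi N i).dualMap, fun j => ?_⟩
  ext x
  simp [relH1EquivPi_mk, gammaIJ_mk]

end RelativeHomology

theorem periods_of_abelian_differentials_on_disc_general
    (E : Type*) [NormedAddCommGroup E] [NormedSpace ℂ E]
    (U : Set E) (hUopen : IsOpen U)
    (c : ℂ) (R : ℝ) (hR : 0 < R)
    (N : ℕ) (m : Fin N → ℕ)
    (p : Fin N → E → ℂ)
    (hp : ∀ i, DifferentiableOn ℂ (p i) U)
    (hpD : ∀ i, ∀ u ∈ U, p i u ∈ Metric.ball c R)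
    (a : E → ℂ → ℂ)
    (ha : DifferentiableOn ℂ (fun q : E × ℂ => a q.1 q.2) (U ×ˢ Metric.ball c R)) :
    -- (a)
    (∀ i j : Fin N,
      DifferentiableOn ℂ
        (fun u => pathIntegral
          (fun z => a u z * ∏ l, (z - p l u) ^ (m l)) (p i u) (p j u)) U) ∧
    -- (b)
    (∀ i : Fin N,
      ∃ b : Module.Basis {j : Fin N // j ≠ i} ℂ (Module.Dual ℂ (RelH1 N)),
        ∀ j : {j : Fin N // j ≠ i}, b j = gammaIJ N i (j : Fin N)) ∧
    -- (c)
    (∃ F : E → (Fin N → ℂ),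
      DifferentiableOn ℂ F U ∧
      ∀ u ∈ U, ∀ i j : Fin N,
        gammaIJ N i j (Submodule.Quotient.mk (F u)) =
          pathIntegral (fun z => a u z * ∏ l, (z - p l u) ^ (m l))
            (p i u) (p j u)) := by
  set α : E → ℂ → ℂ := fun u z => a u z * ∏ l, (z - p l u) ^ (m l)
  have hfactor : ∀ l, DifferentiableOn ℂ (fun q : E × ℂ => (q.2 - p l q.1) ^ m l)
      (U ×ˢ ball c R) := fun l =>
    (differentiableOn_snd.sub ((hp l).comp differentiableOn_fst fun q hq => hq.1)).pow _
  have hα : DifferentiableOn ℂ (fun q : E × ℂ => α q.1 q.2) (U ×ˢ ball c R) :=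
    ha.mul fun q hq => (HasFDerivWithinAt.finsetProd fun l _ =>
      (hfactor l q hq).hasFDerivWithinAt).differentiableWithinAt
  have hperiod : ∀ φ ψ : E → ℂ, DifferentiableOn ℂ φ U → DifferentiableOn ℂ ψ U →
      MapsTo φ U (ball c R) → MapsTo ψ U (ball c R) →
      DifferentiableOn ℂ (fun u => pathIntegral (α u) (φ u) (ψ u)) U :=
    fun _ _ => differentiableOn_pathIntegral hUopen isOpen_ball (convex_ball c R) hα
  refine ⟨fun i j => hperiod _ _ (hp i) (hp j) (hpD i) (hpD j), exists_basis_gammaIJ N,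
    fun u j => pathIntegral (α u) c (p j u), ?_, fun u hu i j => ?_⟩
  · exact differentiableOn_pi.2 fun j =>
      hperiod _ _ (differentiableOn_const c) (hp j) (fun _ _ => mem_ball_self hR) (hpD j)
  · have hαu : DifferentiableOn ℂ (α u) (ball c R) :=
      hα.comp ((differentiableOn_const u).prodMk differentiableOn_id) fun z hz => ⟨hu, hz⟩
    rw [gammaIJ_mk]
    exact (pathIntegral_eq_sub_of_differentiableOn_ball hαu (hpD i u hu) (hpD j u hu)
      (mem_ball_self hR)).symm

/-- **Lemma (periods of a family of Abelian differentials on a disc).**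
Let `D = B(c,R) ⊂ ℂ` be an open disc, `U` a contractible complex manifold (here an open
contractible subset of a complex normed space `E`), `m_1,…,m_N ≥ 0` integers,
`p_1,…,p_N : U → D` holomorphic maps and `a : U×D → ℂ^*` holomorphic and nonvanishing;
consider the family of Abelian differentials
`α_u := a(u,z)(z-p_1(u))^{m_1}⋯(z-p_N(u))^{m_N} dz` on `D`.  Then:
(a) for every `i,j`, the function `u ↦ ∫_{p_i(u)}^{p_j(u)} α_u` is holomorphic on `U`;
(b) for every `i` (and every `u`), the functionals `{γ_{ij} : j ≠ i}` form a basis of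
the dual of `𝐇¹(ℂ_{D,P})_u ≅ ℂ^N/ℂ`;
(c) the assignment `u ↦ (Σ_j c_j γ_{ij} ↦ Σ_j c_j ∫_{γ_{ij}} α_u)` determines a
holomorphic section of the ℂ-local system `𝐇¹(ℂ_{D,P})` over `U`: there is a
holomorphic lift `F : U → ℂ^N` whose class pairs with every `γ_{ij}` to the period
`∫_{p_i(u)}^{p_j(u)} α_u`. -/
theorem periods_of_abelian_differentials_on_disc
    (E : Type*) [NormedAddCommGroup E] [NormedSpace ℂ E]
    (U : Set E) (hUopen : IsOpen U) (hUcontr : ContractibleSpace U)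
    (c : ℂ) (R : ℝ) (hR : 0 < R)
    (N : ℕ) (hN : 0 < N) (m : Fin N → ℕ)
    (p : Fin N → E → ℂ)
    (hp : ∀ i, DifferentiableOn ℂ (p i) U)
    (hpD : ∀ i, ∀ u ∈ U, p i u ∈ Metric.ball c R)
    (a : E → ℂ → ℂ)
    (ha : DifferentiableOn ℂ (fun q : E × ℂ => a q.1 q.2) (U ×ˢ Metric.ball c R))
    (ha0 : ∀ u ∈ U, ∀ z ∈ Metric.ball c R, a u z ≠ 0) :
    -- (a)
    (∀ i j : Fin N,
      DifferentiableOn ℂ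
        (fun u => pathIntegral
          (fun z => a u z * ∏ l, (z - p l u) ^ (m l)) (p i u) (p j u)) U) ∧
    -- (b)
    (∀ i : Fin N,
      ∃ b : Module.Basis {j : Fin N // j ≠ i} ℂ (Module.Dual ℂ (RelH1 N)),
        ∀ j : {j : Fin N // j ≠ i}, b j = gammaIJ N i (j : Fin N)) ∧
    -- (c)
    (∃ F : E → (Fin N → ℂ),
      DifferentiableOn ℂ F U ∧
      ∀ u ∈ U, ∀ i j : Fin N,
        gammaIJ N i j (Submodule.Quotient.mk (F u)) =
          pathIntegral (fun z => a u z * ∏ l, (z - p l u) ^ (m l))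
            (p i u) (p j u)) :=
  periods_of_abelian_differentials_on_disc_general E U hUopen c R hR N m p hp hpD a ha
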